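/- Every thin context-free grammar is finite-index: for every thin context-free grammar G with initial nonterminal S there exists k ∈ ℕ such that for every word α over terminals derivable from S there is a sequence of sentential forms S = α₀ → α₁ → ⋯ → α_m = α, where each step replaces one occurrence of a nonterminal by the right-hand side of one of its rules, such that every α_i contains at most k occurrences of nonterminals. -/

import Mathlib

/-!
A nonterminal `X` reaches `Y` if `X` derives a sentential form containing `Y`; the rank of `X` is
the number of nonterminals strictly below `X` in this preorder. If `X` is thin, the right-hand
side of a rule for `X` contains at most one nonterminal that reaches back to `X`, and all its
other nonterminals have smaller rank. Given a derivation of a terminal word from `X`, first expand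
all the lower-rank nonterminals, one after the other and each with its own bounded derivation,
and only then the one back-reaching nonterminal, of the same rank as `X` but with a shorter
derivation. By induction on the rank and the derivation length, a derivation from `X` then needs
at most `(rank X + 1) * L + 1` nonterminals at a time, `L` being the longest right-hand side.
-/

namespace GVASPaper

/-- A nonterminal is branching if it derives a sentential form containing two copies
of itself; it is thin otherwise. -/
def Branching {T : Type*} (g : ContextFreeGrammar T) (X : g.NT) : Prop :=
  ∃ α β γ : List (Symbol T g.NT),
    g.Derives [Symbol.nonterminal X]
      (α ++ Symbol.nonterminal X :: (β ++ Symbol.nonterminal X :: γ))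

/-- The number of occurrences of nonterminals in a sentential form. -/
def countNT {T N : Type*} (w : List (Symbol T N)) : ℕ :=
  (w.filter fun s => match s with | Symbol.nonterminal _ => true | _ => false).length

section countNT

variable {T N : Type*}

@[simp]
lemma countNT_nil : countNT ([] : List (Symbol T N)) = 0 := rfl

@[simp]
lemma countNT_cons_nonterminal (X : N) (w : List (Symbol T N)) :
    countNT (Symbol.nonterminal X :: w) = countNT w + 1 := by
  simp [countNT]

@[simp]
lemma countNT_cons_terminal (t : T) (w : List (Symbol T N)) :
    countNT (Symbol.terminal t :: w) = countNT w := by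
  simp [countNT]

@[simp]
lemma countNT_append (u v : List (Symbol T N)) : countNT (u ++ v) = countNT u + countNT v := by
  simp [countNT]

@[simp]
lemma countNT_map_terminal (w : List T) :
    countNT (w.map Symbol.terminal : List (Symbol T N)) = 0 := by
  induction w <;> simp_all

lemma countNT_le_length (w : List (Symbol T N)) : countNT w ≤ w.length :=
  List.length_filter_le _ _

lemma countNT_pos_of_mem {X : N} {w : List (Symbol T N)} (h : Symbol.nonterminal X ∈ w) :
    0 < countNT w := by
  obtain ⟨p, q, rfl⟩ := List.append_of_mem h
  simp

end countNT

lemma _root_.ContextFreeRule.Rewrites.append_cases {T N : Type*} {r : ContextFreeRule T N}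
    {x y v : List (Symbol T N)} (h : r.Rewrites (x ++ y) v) :
    (∃ x', r.Rewrites x x' ∧ v = x' ++ y) ∨ (∃ y', r.Rewrites y y' ∧ v = x ++ y') := by
  induction x generalizing v with
  | nil => exact .inr ⟨v, h, rfl⟩
  | cons a x ih =>
    cases h with
    | head => exact .inl ⟨_, .head x, by simp⟩
    | cons _ h =>
      rcases ih h with ⟨x', hx, rfl⟩ | ⟨y', hy, rfl⟩
      · exact .inl ⟨a :: x', .cons a hx, rfl⟩
      · exact .inr ⟨y', hy, rfl⟩

section Grammar

variable {T : Type*} {g : ContextFreeGrammar T}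

lemma _root_.ContextFreeGrammar.Produces.append_cases {x y v : List (Symbol T g.NT)}
    (h : g.Produces (x ++ y) v) :
    (∃ x', g.Produces x x' ∧ v = x' ++ y) ∨ (∃ y', g.Produces y y' ∧ v = x ++ y') := by
  obtain ⟨r, hr, hrw⟩ := h
  rcases hrw.append_cases with ⟨x', hx, rfl⟩ | ⟨y', hy, rfl⟩
  exacts [.inl ⟨x', ⟨r, hr, hx⟩, rfl⟩, .inr ⟨y', ⟨r, hr, hy⟩, rfl⟩]

lemma _root_.ContextFreeGrammar.Produces.countNT_pos {u v : List (Symbol T g.NT)}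
    (h : g.Produces u v) : 0 < countNT u :=
  let ⟨_, _, hr⟩ := h
  countNT_pos_of_mem hr.nonterminal_input_mem

lemma produces_of_mem_rules {r : ContextFreeRule T g.NT} (hr : r ∈ g.rules) :
    g.Produces [Symbol.nonterminal r.input] r.output :=
  ⟨r, hr, .input_output⟩

lemma derives_append_cons {Y : g.NT} {u : List (Symbol T g.NT)}
    (h : g.Derives [Symbol.nonterminal Y] u) (p q : List (Symbol T g.NT)) :
    g.Derives (p ++ Symbol.nonterminal Y :: q) (p ++ u ++ q) := by
  simpa using (h.append_left p).append_right q

inductive DerivesIn (g : ContextFreeGrammar T) :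
    List (Symbol T g.NT) → List (Symbol T g.NT) → ℕ → Prop
  | refl (u : List (Symbol T g.NT)) : DerivesIn g u u 0
  | head {u v w : List (Symbol T g.NT)} {n : ℕ} :
      g.Produces u v → DerivesIn g v w n → DerivesIn g u w (n + 1)

namespace DerivesIn

lemma tail {u v w : List (Symbol T g.NT)} {n : ℕ} (h : DerivesIn g u v n)
    (hp : g.Produces v w) : DerivesIn g u w (n + 1) := by
  induction h with
  | refl => exact .head hp (.refl _)
  | head h₁ _ ih => exact .head h₁ (ih hp)

lemma append_cases {x y w : List (Symbol T g.NT)} {n : ℕ} (h : DerivesIn g (x ++ y) w n) :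
    ∃ w₁ w₂ n₁ n₂, w = w₁ ++ w₂ ∧ n₁ + n₂ = n ∧ DerivesIn g x w₁ n₁ ∧ DerivesIn g y w₂ n₂ := by
  induction n generalizing x y with
  | zero => cases h; exact ⟨x, y, 0, 0, rfl, rfl, .refl _, .refl _⟩
  | succ n ih =>
    cases h with
    | head hp hd =>
      rcases hp.append_cases with ⟨x', hx, rfl⟩ | ⟨y', hy, rfl⟩
      · obtain ⟨w₁, w₂, n₁, n₂, rfl, rfl, h₁, h₂⟩ := ih hd
        exact ⟨w₁, w₂, n₁ + 1, n₂, rfl, by omega, .head hx h₁, h₂⟩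
      · obtain ⟨w₁, w₂, n₁, n₂, rfl, rfl, h₁, h₂⟩ := ih hd
        exact ⟨w₁, w₂, n₁, n₂ + 1, rfl, by omega, h₁, .head hy h₂⟩

lemma eq_of_countNT_eq_zero {u w : List (Symbol T g.NT)} {n : ℕ} (h : DerivesIn g u w n)
    (hu : countNT u = 0) : w = u := by
  cases h with
  | refl => rfl
  | head hp => exact absurd hu hp.countNT_pos.ne'

lemma exists_rule {X : g.NT} {w : List (Symbol T g.NT)} {n : ℕ}
    (h : DerivesIn g [Symbol.nonterminal X] w (n + 1)) :
    ∃ r ∈ g.rules, r.input = X ∧ DerivesIn g r.output w n := by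
  obtain _ | ⟨⟨r, hr, hrw⟩, hd⟩ := h
  cases hrw with
  | head => exact ⟨r, hr, rfl, by simpa using hd⟩
  | cons _ h => cases h

end DerivesIn

lemma _root_.ContextFreeGrammar.Derives.exists_derivesIn {u v : List (Symbol T g.NT)}
    (h : g.Derives u v) : ∃ n, DerivesIn g u v n := by
  induction h with
  | refl => exact ⟨0, .refl u⟩
  | tail _ hp ih => obtain ⟨n, hn⟩ := ih; exact ⟨n + 1, hn.tail hp⟩

inductive BoundedDerives (g : ContextFreeGrammar T) (k : ℕ) :
    List (Symbol T g.NT) → List (Symbol T g.NT) → Prop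
  | refl {u : List (Symbol T g.NT)} : countNT u ≤ k → BoundedDerives g k u u
  | head {u v w : List (Symbol T g.NT)} :
      g.Produces u v → countNT u ≤ k → BoundedDerives g k v w → BoundedDerives g k u w

namespace BoundedDerives

variable {k : ℕ} {u v w : List (Symbol T g.NT)}

lemma trans (h₁ : BoundedDerives g k u v) (h₂ : BoundedDerives g k v w) :
    BoundedDerives g k u w := by
  induction h₁ with
  | refl => exact h₂
  | head hp hc _ ih => exact .head hp hc (ih h₂)

lemma mono {k' : ℕ} (hk : k ≤ k') (h : BoundedDerives g k u v) : BoundedDerives g k' u v := by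
  induction h with
  | refl hc => exact .refl (hc.trans hk)
  | head hp hc _ ih => exact .head hp (hc.trans hk) ih

lemma append_left (h : BoundedDerives g k u v) (p : List (Symbol T g.NT)) :
    BoundedDerives g (countNT p + k) (p ++ u) (p ++ v) := by
  induction h with
  | refl hc => exact .refl (by simpa using hc)
  | head hp hc _ ih => exact .head (hp.append_left p) (by simpa using hc) ih

lemma append_right (h : BoundedDerives g k u v) (q : List (Symbol T g.NT)) :
    BoundedDerives g (k + countNT q) (u ++ q) (v ++ q) := by
  induction h with
  | refl hc => exact .refl (by simpa using hc)
  | head hp hc _ ih => exact .head (hp.append_right q) (by simpa using hc) ih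

lemma exists_chain (h : BoundedDerives g k u v) :
    ∃ forms : List (List (Symbol T g.NT)),
      forms.IsChain g.Produces ∧ forms.head? = some u ∧ forms.getLast? = some v ∧
      ∀ φ ∈ forms, countNT φ ≤ k := by
  induction h with
  | @refl u hc => exact ⟨[u], List.isChain_singleton u, rfl, rfl, by simpa using hc⟩
  | @head u _ _ hp hc _ ih =>
    obtain ⟨forms, hch, hhd, hlast, hb⟩ := ih
    refine ⟨u :: forms, ?_, rfl, List.mem_getLast?_cons hlast, ?_⟩
    · exact List.isChain_cons.mpr ⟨by simpa [hhd] using hp, hch⟩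
    · simpa using ⟨hc, hb⟩

end BoundedDerives

def ResolvesWithin (g : ContextFreeGrammar T) (k : ℕ) (u : List (Symbol T g.NT)) : Prop :=
  ∀ w n, DerivesIn g u w n → countNT w = 0 → BoundedDerives g k u w

-- Resolve the nonterminals of `ss` from left to right: each one still waiting costs one.
lemma ResolvesWithin.of_forall_mem {k : ℕ} {ss : List (Symbol T g.NT)}
    (h : ∀ Y : g.NT, Symbol.nonterminal Y ∈ ss → ResolvesWithin g k [Symbol.nonterminal Y]) :
    ResolvesWithin g (k + countNT ss) ss := by
  induction ss with
  | nil =>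
    intro w n hd _
    rw [hd.eq_of_countNT_eq_zero rfl]
    exact .refl (by simp)
  | cons s rest ih =>
    intro w n hd hw
    obtain ⟨w₁, w₂, n₁, n₂, rfl, -, h₁, h₂⟩ := DerivesIn.append_cases (x := [s]) hd
    simp only [countNT_append] at hw
    have hrest := ih (fun Y hm => h Y (List.mem_cons_of_mem _ hm)) w₂ n₂ h₂ (by omega)
    cases s with
    | terminal t =>
      rw [h₁.eq_of_countNT_eq_zero rfl]
      simpa using hrest.append_left [Symbol.terminal t]
    | nonterminal Y =>
      have hw₁ : countNT w₁ = 0 := by omega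
      have hfirst := (h Y List.mem_cons_self w₁ n₁ h₁ hw₁).append_right rest
      exact (hfirst.mono (by simp)).trans ((hrest.append_left w₁).mono (by simp [hw₁]))

-- `Z` is resolved last, so that the other nonterminals do not add to its index `K`.
lemma BoundedDerives.of_derivesIn_append_cons {k K n : ℕ} {p q w : List (Symbol T g.NT)} {Z : g.NT}
    (h : DerivesIn g (p ++ Symbol.nonterminal Z :: q) w n) (hw : countNT w = 0)
    (hY : ∀ Y : g.NT, Symbol.nonterminal Y ∈ p ++ q → ResolvesWithin g k [Symbol.nonterminal Y])
    (hZ : ∀ v m, m ≤ n → DerivesIn g [Symbol.nonterminal Z] v m → countNT v = 0 →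
      BoundedDerives g K [Symbol.nonterminal Z] v)
    (hK : k + countNT (p ++ Symbol.nonterminal Z :: q) ≤ K) :
    BoundedDerives g K (p ++ Symbol.nonterminal Z :: q) w := by
  obtain ⟨u, v', n₁, n₂', rfl, hn, hp, hzq⟩ := h.append_cases
  obtain ⟨v, y, n₂, n₃, rfl, hn', hz, hq⟩ := DerivesIn.append_cases (x := [_]) hzq
  simp only [countNT_append, countNT_cons_nonterminal] at hw hK
  have hu : countNT u = 0 := by omega
  have hy : countNT y = 0 := by omega
  have resolve_p : BoundedDerives g K (p ++ Symbol.nonterminal Z :: q)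
      (u ++ Symbol.nonterminal Z :: q) :=
    ((ResolvesWithin.of_forall_mem (fun Y hm => hY Y (List.mem_append_left _ hm)) u n₁ hp
      hu).append_right _).mono (by simp; omega)
  have resolve_q : BoundedDerives g K (u ++ Symbol.nonterminal Z :: q)
      (u ++ Symbol.nonterminal Z :: y) :=
    (((ResolvesWithin.of_forall_mem (fun Y hm => hY Y (List.mem_append_right _ hm)) y n₃ hq
      hy).append_left [Symbol.nonterminal Z]).append_left u).mono (by simp; omega)
  have resolve_Z : BoundedDerives g K (u ++ Symbol.nonterminal Z :: y) (u ++ (v ++ y)) := by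
    simpa [hu, hy] using ((hZ v n₂ (by omega) hz (by omega)).append_left u).append_right y
  exact resolve_p.trans (resolve_q.trans resolve_Z)

def Reaches (g : ContextFreeGrammar T) (X Y : g.NT) : Prop :=
  ∃ p q : List (Symbol T g.NT), g.Derives [Symbol.nonterminal X] (p ++ Symbol.nonterminal Y :: q)

namespace Reaches

lemma refl (X : g.NT) : Reaches g X X :=
  ⟨[], [], .refl _⟩

lemma trans {X Y Z : g.NT} (h₁ : Reaches g X Y) (h₂ : Reaches g Y Z) : Reaches g X Z := by
  obtain ⟨p, q, h₁⟩ := h₁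
  obtain ⟨a, b, h₂⟩ := h₂
  exact ⟨p ++ a, b ++ q, by simpa using h₁.trans (derives_append_cons h₂ p q)⟩

lemma of_mem_output {r : ContextFreeRule T g.NT} (hr : r ∈ g.rules) {Y : g.NT}
    (hY : Symbol.nonterminal Y ∈ r.output) : Reaches g r.input Y := by
  obtain ⟨p, q, hpq⟩ := List.append_of_mem hY
  exact ⟨p, q, hpq ▸ (produces_of_mem_rules hr).single⟩

end Reaches

lemma Branching.of_derives_of_reaches {X Y Z : g.NT} {p m s : List (Symbol T g.NT)}
    (h : g.Derives [Symbol.nonterminal X]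
      (p ++ Symbol.nonterminal Y :: (m ++ Symbol.nonterminal Z :: s)))
    (hY : Reaches g Y X) (hZ : Reaches g Z X) : Branching g X := by
  obtain ⟨a, b, hY⟩ := hY
  obtain ⟨c, d, hZ⟩ := hZ
  refine ⟨p ++ a, b ++ m ++ c, d ++ s, ?_⟩
  have h₁ := derives_append_cons hY p (m ++ Symbol.nonterminal Z :: s)
  have h₂ := derives_append_cons hZ (p ++ a ++ Symbol.nonterminal X :: (b ++ m)) s
  simpa using h.trans (h₁.trans (by simpa using h₂))

lemma not_reaches_of_mem_append {X Y Z : g.NT} {p q : List (Symbol T g.NT)}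
    (hX : ¬ Branching g X) (h : g.Derives [Symbol.nonterminal X] (p ++ Symbol.nonterminal Z :: q))
    (hZ : Reaches g Z X) (hY : Symbol.nonterminal Y ∈ p ++ q) : ¬ Reaches g Y X := by
  intro hYX
  rcases List.mem_append.mp hY with hp | hq
  · obtain ⟨p₁, p₂, rfl⟩ := List.append_of_mem hp
    exact hX (.of_derives_of_reaches (by simpa using h) hYX hZ)
  · obtain ⟨q₁, q₂, rfl⟩ := List.append_of_mem hq
    exact hX (.of_derives_of_reaches h hZ hYX)

noncomputable def rank (g : ContextFreeGrammar T) (X : g.NT) : ℕ :=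
  {Y | Reaches g X Y ∧ ¬ Reaches g Y X}.ncard

lemma rank_lt_rank [Finite g.NT] {X Y : g.NT} (hXY : Reaches g X Y) (hYX : ¬ Reaches g Y X) :
    rank g Y < rank g X := by
  refine Set.ncard_lt_ncard ⟨?_, fun hsub => (hsub ⟨hXY, hYX⟩).2 (.refl Y)⟩ (Set.toFinite _)
  rintro Z ⟨hYZ, hZY⟩
  exact ⟨hXY.trans hYZ, fun hZX => hZY (hZX.trans hXY)⟩

lemma rank_eq_rank {X Y : g.NT} (hXY : Reaches g X Y) (hYX : Reaches g Y X) :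
    rank g Y = rank g X := by
  unfold rank
  congr 1
  ext Z
  exact ⟨fun ⟨h₁, h₂⟩ => ⟨hXY.trans h₁, fun h => h₂ (h.trans hXY)⟩,
    fun ⟨h₁, h₂⟩ => ⟨hYX.trans h₁, fun h => h₂ (h.trans hYX)⟩⟩

lemma rank_le_card [Finite g.NT] (X : g.NT) : rank g X ≤ Nat.card g.NT := by
  rw [← Set.ncard_univ]
  exact Set.ncard_le_ncard (Set.subset_univ _)

noncomputable def maxOutputLength (g : ContextFreeGrammar T) : ℕ :=
  g.rules.sup fun r => r.output.length

lemma countNT_output_le_maxOutputLength {r : ContextFreeRule T g.NT} (hr : r ∈ g.rules) :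
    countNT r.output ≤ maxOutputLength g :=
  (countNT_le_length _).trans (Finset.le_sup (f := fun r => r.output.length) hr)

theorem resolvesWithin_of_rank_eq [Finite g.NT] (hthin : ∀ X : g.NT, ¬ Branching g X) (r : ℕ) :
    ∀ X : g.NT, rank g X = r →
      ResolvesWithin g ((r + 1) * maxOutputLength g + 1) [Symbol.nonterminal X] := by
  induction r using Nat.strong_induction_on with | _ r ihr => ?_
  intro X hX w n hd hw
  induction n using Nat.strong_induction_on generalizing X w with | _ n ihn => ?_
  obtain _ | n := n
  · cases hd
    simp at hw
  obtain ⟨ru, hru, rfl, hout⟩ := hd.exists_rule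
  set L := maxOutputLength g
  have hlow : ∀ Y : g.NT, Symbol.nonterminal Y ∈ ru.output → ¬ Reaches g Y ru.input →
      ResolvesWithin g (r * L + 1) [Symbol.nonterminal Y] := by
    intro Y hY hYX w' n' hd' hw'
    have hlt : rank g Y < r := hX ▸ rank_lt_rank (.of_mem_output hru hY) hYX
    exact (ihr _ hlt Y rfl w' n' hd' hw').mono (by gcongr; omega)
  have hK : r * L + 1 + countNT ru.output ≤ (r + 1) * L + 1 := by
    have := countNT_output_le_maxOutputLength hru
    rw [add_one_mul]
    omega
  refine .head (produces_of_mem_rules hru) (by simp) ?_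
  by_cases hs : ∃ p Z q, ru.output = p ++ Symbol.nonterminal Z :: q ∧ Reaches g Z ru.input
  · obtain ⟨p, Z, q, hpq, hZ⟩ := hs
    have hder : g.Derives [Symbol.nonterminal ru.input] (p ++ Symbol.nonterminal Z :: q) :=
      hpq ▸ (produces_of_mem_rules hru).single
    have hZr : rank g Z = r := hX ▸ rank_eq_rank (.of_mem_output hru (hpq ▸ by simp)) hZ
    rw [hpq] at hout hK hlow ⊢
    refine .of_derivesIn_append_cons hout hw (fun Y hY => hlow Y ?_ ?_)
      (fun v m hm hd' hv => ihn m (by omega) Z hZr v hd' hv) hK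
    · exact ((List.sublist_cons_self _ q).append_left p).subset hY
    · exact not_reaches_of_mem_append (hthin _) hder hZ hY
  · refine ((ResolvesWithin.of_forall_mem fun Y hY => ?_) w n hout hw).mono hK
    obtain ⟨p, q, hpq⟩ := List.append_of_mem hY
    exact hlow Y hY fun hYX => hs ⟨p, Y, q, hpq, hYX⟩

end Grammar

/-- Every thin context-free grammar is finite-index: there is `k` such that
every word of terminals derivable from the initial nonterminal has a derivation all of whose
sentential forms contain at most `k` occurrences of nonterminals. -/
theorem thin_implies_finite_index {T : Type*} (g : ContextFreeGrammar T) [Finite g.NT]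
    (hthin : ∀ X : g.NT, ¬ Branching g X) :
    ∃ k : ℕ, ∀ w : List T,
      g.Derives [Symbol.nonterminal g.initial] (w.map Symbol.terminal) →
      ∃ forms : List (List (Symbol T g.NT)),
        forms.Chain' g.Produces ∧
        forms.head? = some [Symbol.nonterminal g.initial] ∧
        forms.getLast? = some (w.map Symbol.terminal) ∧
        ∀ φ ∈ forms, countNT φ ≤ k := by
  refine ⟨(Nat.card g.NT + 1) * maxOutputLength g + 1, fun w hw => ?_⟩
  obtain ⟨n, hn⟩ := hw.exists_derivesIn
  have hbd := resolvesWithin_of_rank_eq hthin _ g.initial rfl _ n hn (countNT_map_terminal w)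
  exact (hbd.mono (by gcongr; exact rank_le_card _)).exists_chain

end GVASPaper
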